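/- arXiv:2408.13596 — 2 statements merged into one kernel-verified Lean document; each statement's English description precedes it below -/
import Mathlib

section
/- With ρ_{b,c} the hyperbolic tangent rho-function and the continuity condition b = q₁ tanh(q₂(c−b)), the function h : ℝ≥0 → ℝ defined by h(z) = ρ_{b,c}(√z) is concave on [0, ∞). -/
lemma tanh_mono' : Monotone Real.tanh := by
  intro x y h
  rw [Real.tanh_eq_sinh_div_cosh, Real.tanh_eq_sinh_div_cosh,
    div_le_div_iff₀ (Real.cosh_pos x) (Real.cosh_pos y)]
  have h1 : Real.sinh (x - y) ≤ 0 := by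
    rw [← Real.sinh_zero]; exact Real.sinh_le_sinh.2 (by linarith)
  have h2 := Real.sinh_sub x y
  linarith [mul_comm (Real.sinh y) (Real.cosh x)]

lemma mid_deriv (c q₁ q₂ d : ℝ) (hq₂ : q₂ ≠ 0) {z : ℝ} (hz : 0 < z) :
    HasDerivAt (fun w => d - (q₁/q₂) * Real.log (Real.cosh (q₂*(c - Real.sqrt w))))
      (q₁ * Real.tanh (q₂*(c - Real.sqrt z)) / (2 * Real.sqrt z)) z := by
  have hs0 : Real.sqrt z ≠ 0 := (Real.sqrt_pos.2 hz).ne'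
  have h1 : HasDerivAt Real.sqrt (1/(2*Real.sqrt z)) z := Real.hasDerivAt_sqrt hz.ne'
  have h2 : HasDerivAt (fun w => q₂ * (c - Real.sqrt w)) (q₂ * (0 - 1/(2*Real.sqrt z))) z :=
    ((hasDerivAt_const z c).sub h1).const_mul q₂
  have h3 : HasDerivAt (fun w => Real.cosh (q₂ * (c - Real.sqrt w)))
      (Real.sinh (q₂*(c-Real.sqrt z)) * (q₂ * (0 - 1/(2*Real.sqrt z)))) z := h2.cosh
  have h4 : HasDerivAt (fun w => Real.log (Real.cosh (q₂*(c - Real.sqrt w))))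
      ((Real.sinh (q₂*(c-Real.sqrt z)) * (q₂ * (0 - 1/(2*Real.sqrt z)))) / Real.cosh (q₂*(c-Real.sqrt z))) z :=
    h3.log (Real.cosh_pos _).ne'
  have h5 := (hasDerivAt_const z d).sub (h4.const_mul (q₁/q₂))
  refine HasDerivAt.congr_deriv h5 ?_
  rw [Real.tanh_eq_sinh_div_cosh]
  have := (Real.cosh_pos (q₂*(c-Real.sqrt z))).ne'
  field_simp
  ring

theorem stmt_6 (b c q₁ q₂ d : ℝ) (hb : 0 < b) (hbc : b < c)
    (hq₁ : 0 < q₁) (hq₂ : 0 < q₂)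
    (hcont : b = q₁ * Real.tanh (q₂ * (c - b)))
    (hd : d = b ^ 2 / 2 + (q₁ / q₂) * Real.log (Real.cosh (q₂ * (c - b))))
    (ρ : ℝ → ℝ)
    (hρ : ∀ z, ρ z =
      if |z| ≤ b then z ^ 2 / 2
      else if |z| ≤ c then d - (q₁ / q₂) * Real.log (Real.cosh (q₂ * (c - |z|)))
      else d) :
    ConcaveOn ℝ (Set.Ici (0 : ℝ)) (fun z => ρ (Real.sqrt z)) := by
  have hc : 0 < c := hb.trans hbc
  have hb2c2 : b^2 < c^2 := by nlinarith
  have hb2 : (0:ℝ) < b^2 := by positivity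
  set f : ℝ → ℝ := fun z => if z ≤ b^2 then z/2
      else if z ≤ c^2 then d - (q₁/q₂) * Real.log (Real.cosh (q₂*(c - Real.sqrt z)))
      else d with hf
  -- ρ ∘ sqrt agrees with f on Ici 0
  have hfg : ∀ z ∈ Set.Ici (0:ℝ), ρ (Real.sqrt z) = f z := by
    intro z hz
    have hz0 : (0:ℝ) ≤ z := hz
    rw [hρ, abs_of_nonneg (Real.sqrt_nonneg z)]
    have h1 : Real.sqrt z ≤ b ↔ z ≤ b^2 := by
      constructor
      · intro h; nlinarith [Real.sq_sqrt hz0, Real.sqrt_nonneg z]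
      · intro h; nlinarith [Real.sq_sqrt hz0, Real.sqrt_nonneg z]
    have h2 : Real.sqrt z ≤ c ↔ z ≤ c^2 := by
      constructor
      · intro h; nlinarith [Real.sq_sqrt hz0, Real.sqrt_nonneg z]
      · intro h; nlinarith [Real.sq_sqrt hz0, Real.sqrt_nonneg z]
    simp only [h1, h2, Real.sq_sqrt hz0]
    rfl
  -- key inequality
  have key : ∀ t : ℝ, b ≤ t → q₁ * Real.tanh (q₂ * (c - t)) ≤ t := by
    intro t ht
    calc q₁ * Real.tanh (q₂ * (c - t)) ≤ q₁ * Real.tanh (q₂ * (c - b)) := by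
          exact mul_le_mul_of_nonneg_left (tanh_mono' (by nlinarith)) hq₁.le
      _ = b := hcont.symm
      _ ≤ t := ht
  have tanh_nn : ∀ t : ℝ, t ≤ c → 0 ≤ Real.tanh (q₂ * (c - t)) := by
    intro t ht
    rw [← Real.tanh_zero]
    exact tanh_mono' (by nlinarith)
  -- derivative
  set φ : ℝ → ℝ := fun z => if z ≤ b^2 then (1:ℝ)/2
      else if z ≤ c^2 then q₁ * Real.tanh (q₂*(c - Real.sqrt z)) / (2 * Real.sqrt z)
      else 0 with hφ
  have e1 : Set.EqOn f (fun w => w/2) (Set.Iic (b^2)) := by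
    intro w hw; simp only [hf]; rw [if_pos (Set.mem_Iic.1 hw)]
  have e2 : Set.EqOn f (fun w => d - (q₁/q₂) * Real.log (Real.cosh (q₂*(c - Real.sqrt w))))
      (Set.Icc (b^2) (c^2)) := by
    intro w hw
    rcases eq_or_lt_of_le hw.1 with h | h
    · simp only [hf]
      rw [if_pos h.symm.le, ← h, Real.sqrt_sq hb.le]
      rw [hd]; ring
    · simp only [hf]; rw [if_neg (not_le.2 h), if_pos hw.2]
  have e3 : Set.EqOn f (fun _ => d) (Set.Ici (c^2)) := by
    intro w hw
    rcases eq_or_lt_of_le (Set.mem_Ici.1 hw) with h | h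
    · simp only [hf]
      rw [if_neg (not_le.2 (h ▸ hb2c2)), if_pos h.ge, ← h, Real.sqrt_sq hc.le]
      simp
    · simp only [hf]
      rw [if_neg (by linarith : ¬ w ≤ b^2), if_neg (not_le.2 h)]
  have hderiv : ∀ z ∈ Set.Ioi (0:ℝ), HasDerivAt f (φ z) z := by
    intro z hz
    have hz' : (0:ℝ) < z := hz
    rcases lt_trichotomy z (b^2) with h | h | h
    · have hev : f =ᶠ[nhds z] (fun w => w/2) := by
        filter_upwards [Iio_mem_nhds h] with w hw
        exact e1 (Set.mem_Iic.2 hw.le)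
      have : HasDerivAt f (1/2) z :=
        (((hasDerivAt_id z).div_const 2).congr_of_eventuallyEq hev)
      simpa only [hφ, if_pos h.le] using this
    · subst h
      have d1 : HasDerivWithinAt f (1/2) (Set.Iic (b^2)) (b^2) :=
        (((hasDerivAt_id _).div_const 2).hasDerivWithinAt).congr e1 (e1 Set.self_mem_Iic)
      have hmidv : q₁ * Real.tanh (q₂*(c - Real.sqrt (b^2))) / (2 * Real.sqrt (b^2)) = 1/2 := by
        rw [Real.sqrt_sq hb.le, ← hcont]
        field_simp
      have d2 : HasDerivWithinAt f (1/2) (Set.Icc (b^2) (c^2)) (b^2) := by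
        have := (mid_deriv c q₁ q₂ d hq₂.ne' hb2).hasDerivWithinAt (s := Set.Icc (b^2) (c^2))
        rw [hmidv] at this
        exact this.congr e2 (e2 (Set.left_mem_Icc.2 hb2c2.le))
      have := d1.union d2
      rw [Set.Iic_union_Icc_eq_Iic hb2c2.le] at this
      have hda : HasDerivAt f (1/2) (b^2) := this.hasDerivAt (Iic_mem_nhds hb2c2)
      simpa only [hφ, if_pos (le_refl (b^2))] using hda
    · rcases lt_trichotomy z (c^2) with h2 | h2 | h2
      · have hev : f =ᶠ[nhds z]
            (fun w => d - (q₁/q₂) * Real.log (Real.cosh (q₂*(c - Real.sqrt w)))) := by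
          filter_upwards [Ioo_mem_nhds h h2] with w hw
          exact e2 ⟨hw.1.le, hw.2.le⟩
        have := (mid_deriv c q₁ q₂ d hq₂.ne' hz').congr_of_eventuallyEq hev
        simpa only [hφ, if_neg (not_le.2 h), if_pos h2.le] using this
      · subst h2
        have hmidv : q₁ * Real.tanh (q₂*(c - Real.sqrt (c^2))) / (2 * Real.sqrt (c^2)) = 0 := by
          rw [Real.sqrt_sq hc.le]
          simp
        have d2 : HasDerivWithinAt f 0 (Set.Icc (b^2) (c^2)) (c^2) := by
          have := (mid_deriv c q₁ q₂ d hq₂.ne' (hb2.trans hb2c2)).hasDerivWithinAt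
            (s := Set.Icc (b^2) (c^2))
          rw [hmidv] at this
          exact this.congr e2 (e2 (Set.right_mem_Icc.2 hb2c2.le))
        have d3 : HasDerivWithinAt f 0 (Set.Ici (c^2)) (c^2) :=
          ((hasDerivAt_const (c^2) d).hasDerivWithinAt).congr e3 (e3 Set.self_mem_Ici)
        have := d2.union d3
        rw [Set.Icc_union_Ici_eq_Ici hb2c2.le] at this
        have hda : HasDerivAt f 0 (c^2) := this.hasDerivAt (Ici_mem_nhds hb2c2)
        have : φ (c^2) = 0 := by
          simp only [hφ, if_neg (not_le.2 hb2c2), if_pos (le_refl (c^2))]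
          exact hmidv
        rw [this]; exact hda
      · have hev : f =ᶠ[nhds z] (fun _ => d) := by
          filter_upwards [Ioi_mem_nhds h2] with w hw
          exact e3 (Set.mem_Ici.2 hw.le)
        have := (hasDerivAt_const z d).congr_of_eventuallyEq hev
        simpa only [hφ, if_neg (not_le.2 (h : b^2 < z)), if_neg (not_le.2 h2)] using this
  -- antitone of φ on Ioi 0
  have hanti : AntitoneOn φ (Set.Ioi (0:ℝ)) := by
    intro x hx y hy hxy
    have hx' : (0:ℝ) < x := hx
    have hy' : (0:ℝ) < y := hy
    by_cases hyb : y ≤ b^2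
    · simp only [hφ, if_pos hyb, if_pos (hxy.trans hyb)]
      exact le_refl _
    · have hyb' : b^2 < y := not_le.1 hyb
      have hsy : b < Real.sqrt y := (Real.lt_sqrt hb.le).2 hyb'
      have hsy0 : 0 < Real.sqrt y := hb.trans hsy
      by_cases hyc : y ≤ c^2
      · have hsyc : Real.sqrt y ≤ c := by
          rw [← Real.sqrt_sq hc.le]; exact Real.sqrt_le_sqrt hyc
        have hkey := key (Real.sqrt y) hsy.le
        have htnn := tanh_nn (Real.sqrt y) hsyc
        by_cases hxb : x ≤ b^2
        · simp only [hφ, if_pos hxb, if_neg (not_le.2 hyb'), if_pos hyc]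
          rw [div_le_iff₀ (by positivity)]
          nlinarith
        · have hxb' : b^2 < x := not_le.1 hxb
          have hsx : b < Real.sqrt x := (Real.lt_sqrt hb.le).2 hxb'
          have hsx0 : 0 < Real.sqrt x := hb.trans hsx
          have hxc : x ≤ c^2 := hxy.trans hyc
          have hsxy : Real.sqrt x ≤ Real.sqrt y := Real.sqrt_le_sqrt hxy
          have hsxc : Real.sqrt x ≤ c := hsxy.trans hsyc
          simp only [hφ, if_neg (not_le.2 hyb'), if_pos hyc, if_neg (not_le.2 hxb'), if_pos hxc]
          refine div_le_div₀ (mul_nonneg hq₁.le (tanh_nn _ hsxc))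
            (mul_le_mul_of_nonneg_left (tanh_mono' (by nlinarith)) hq₁.le)
            (by positivity) (by linarith)
      · have hyc' : c^2 < y := not_le.1 hyc
        simp only [hφ, if_neg (not_le.2 hyb'), if_neg (not_le.2 hyc')]
        split_ifs with h1 h2
        · norm_num
        · have hsxc : Real.sqrt x ≤ c := by
            rw [← Real.sqrt_sq hc.le]; exact Real.sqrt_le_sqrt h2
          have := tanh_nn (Real.sqrt x) hsxc
          positivity
        · exact le_refl 0
  -- assemble
  have Hf : ConcaveOn ℝ (Set.Ici (0:ℝ)) f := by
    apply AntitoneOn.concaveOn_of_deriv (convex_Ici 0)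
    · intro z hz
      rcases eq_or_lt_of_le (Set.mem_Ici.1 hz) with h | h
      · have hev : f =ᶠ[nhds z] (fun w => w/2) := by
          filter_upwards [Iio_mem_nhds (show z < b^2 by rw [← h]; exact hb2)] with w hw
          exact e1 (Set.mem_Iic.2 hw.le)
        have hcz : ContinuousAt (fun w : ℝ => w/2) z := by fun_prop
        exact (hcz.congr hev.symm).continuousWithinAt
      · exact (hderiv z h).differentiableAt.continuousAt.continuousWithinAt
    · rw [interior_Ici]
      intro z hz
      exact (hderiv z hz).differentiableAt.differentiableWithinAt
    · rw [interior_Ici]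
      intro x hx y hy hxy
      rw [(hderiv x hx).deriv, (hderiv y hy).deriv]
      exact hanti hx hy hxy
  refine ⟨convex_Ici 0, fun x hx y hy a a' ha ha' hab => ?_⟩
  show a • ρ (Real.sqrt x) + a' • ρ (Real.sqrt y) ≤ ρ (Real.sqrt (a • x + a' • y))
  rw [hfg x hx, hfg y hy, hfg _ ((convex_Ici 0) hx hy ha ha' hab)]
  simpa using Hf.2 hx hy ha ha' hab
end

section
/- On the open interval (b², c²), the second derivative of z ↦ ρ_{b,c}(√z) is nonpositive; explicitly, for b² < z < c², d²/dz² [d − (q₁/q₂) ln(cosh(q₂(c − √z)))] ≤ 0. -/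
theorem stmt_7 (b c q₁ q₂ d : ℝ) (hb : 0 < b) (hbc : b < c)
    (hq₁ : 0 < q₁) (hq₂ : 0 < q₂) :
    ∀ z : ℝ, b ^ 2 < z → z < c ^ 2 →
      deriv (deriv (fun z : ℝ =>
        d - (q₁ / q₂) * Real.log (Real.cosh (q₂ * (c - Real.sqrt z))))) z ≤ 0 := by
  intro z hz1 hz2
  have hz0 : (0:ℝ) < z := lt_trans (pow_pos hb 2) hz1
  set g : ℝ → ℝ := fun x => q₁ * Real.sinh (q₂ * (c - Real.sqrt x)) /
      (2 * Real.sqrt x * Real.cosh (q₂ * (c - Real.sqrt x))) with hgdef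
  have key : ∀ x : ℝ, 0 < x →
      HasDerivAt (fun y : ℝ =>
        d - (q₁ / q₂) * Real.log (Real.cosh (q₂ * (c - Real.sqrt y)))) (g x) x := by
    intro x hx
    have hsx : 0 < Real.sqrt x := Real.sqrt_pos.2 hx
    have h1 : HasDerivAt Real.sqrt (1 / (2 * Real.sqrt x)) x := Real.hasDerivAt_sqrt hx.ne'
    have h2 : HasDerivAt (fun y => c - Real.sqrt y) (0 - 1 / (2 * Real.sqrt x)) x :=
      (hasDerivAt_const x c).sub h1
    have h3 := h2.const_mul q₂
    have h4 := h3.cosh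
    have h5 := h4.log (Real.cosh_pos _).ne'
    have h6 := (hasDerivAt_const x d).sub (h5.const_mul (q₁ / q₂))
    convert h6 using 1
    have hC := (Real.cosh_pos (x := q₂ * (c - Real.sqrt x))).ne'
    case e'_4 => rfl
    case e'_5 => rfl
    case e'_8 => rfl
    rw [hgdef]
    field_simp [hgdef]
    ring
  have hnhds : Set.Ioi (0:ℝ) ∈ nhds z := isOpen_Ioi.mem_nhds hz0
  have heq : deriv (fun z : ℝ =>
      d - (q₁ / q₂) * Real.log (Real.cosh (q₂ * (c - Real.sqrt z)))) =ᶠ[nhds z] g := by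
    filter_upwards [hnhds] with x hx using (key x hx).deriv
  rw [heq.deriv_eq]
  -- compute deriv g z
  have hsz : 0 < Real.sqrt z := Real.sqrt_pos.2 hz0
  set s := Real.sqrt z with hs
  set u := q₂ * (c - s) with hudef
  have h1 : HasDerivAt Real.sqrt (1 / (2 * s)) z := Real.hasDerivAt_sqrt hz0.ne'
  have h2 : HasDerivAt (fun y => c - Real.sqrt y) (0 - 1 / (2 * s)) z :=
    (hasDerivAt_const z c).sub h1
  have h3 := h2.const_mul q₂
  have hN : HasDerivAt (fun x => q₁ * Real.sinh (q₂ * (c - Real.sqrt x)))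
      (q₁ * (Real.cosh u * (q₂ * (0 - 1 / (2 * s))))) z := (h3.sinh).const_mul q₁
  have hD : HasDerivAt (fun x => 2 * Real.sqrt x * Real.cosh (q₂ * (c - Real.sqrt x)))
      (2 * (1 / (2 * s)) * Real.cosh u +
        2 * s * (Real.sinh u * (q₂ * (0 - 1 / (2 * s))))) z :=
    (h1.const_mul 2).mul h3.cosh
  have hCpos : 0 < Real.cosh u := Real.cosh_pos u
  have hDne : 2 * s * Real.cosh u ≠ 0 := by positivity
  have hG := hN.div hD hDne
  have hgd : deriv g z = (q₁ * (Real.cosh u * (q₂ * (0 - 1 / (2 * s)))) *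
      (2 * s * Real.cosh u) - q₁ * Real.sinh u *
      (2 * (1 / (2 * s)) * Real.cosh u +
        2 * s * (Real.sinh u * (q₂ * (0 - 1 / (2 * s)))))) /
      (2 * s * Real.cosh u) ^ 2 := hG.deriv
  rw [hgd]
  apply div_nonpos_of_nonpos_of_nonneg _ (by positivity)
  have hSnn : 0 ≤ Real.sinh u := by
    apply Real.sinh_nonneg_iff.2
    have hsc : s < c := by
      rw [hs, show c = Real.sqrt (c ^ 2) from (Real.sqrt_sq (hb.trans hbc).le).symm]
      exact Real.sqrt_lt_sqrt hz0.le hz2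
    have : 0 ≤ c - s := by linarith
    positivity
  have hid : Real.cosh u ^ 2 - Real.sinh u ^ 2 = 1 := Real.cosh_sq_sub_sinh_sq u
  have hnum : q₁ * (Real.cosh u * (q₂ * (0 - 1 / (2 * s)))) * (2 * s * Real.cosh u) -
      q₁ * Real.sinh u * (2 * (1 / (2 * s)) * Real.cosh u +
        2 * s * (Real.sinh u * (q₂ * (0 - 1 / (2 * s))))) =
      -(q₁ * q₂) - q₁ * Real.sinh u * Real.cosh u / s := by
    field_simp
    linear_combination (-(q₂ * s)) * hid
  rw [hnum]
  have : 0 ≤ q₁ * Real.sinh u * Real.cosh u / s := by positivity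
  nlinarith [mul_pos hq₁ hq₂]
end
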